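/- arXiv:1504.07999 — 4 statements merged into one kernel-verified Lean document; each statement's English description precedes it below -/
import Mathlib

section
/- If r, s ≥ 2 are integers with (s = 2 → r = 2), ω = e^{2πi/r}, η = e^{2πi/s}, and α_{ij} (for 1 ≤ i < j ≤ n) are independent uniform on {0,…,r-1}, β_k (for 1 ≤ k ≤ n) independent uniform on {0,…,s-1}, then Σ_{w,x,y,z ∈ {0,1}ⁿ} |E_α[ω^{Σ_{i<j} α_{ij}(w_i w_j + x_i x_j - y_i y_j - z_i z_j)}] · E_β[η^{Σ_k β_k(w_k + x_k - y_k - z_k)}]| ≤ 3·2^{2n}. -/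
open Finset Complex

private lemma ite_nonneg' (P : Prop) [Decidable P] : (0:ℝ) ≤ if P then 1 else 0 := by
  split <;> norm_num

private lemma zpow_sum' {ι : Type*} {ω : ℂ} (h : ω ≠ 0) (s : Finset ι) (f : ι → ℤ) :
    ω ^ (∑ i ∈ s, f i) = ∏ i ∈ s, ω ^ f i := by
  induction s using Finset.cons_induction with
  | empty => simp
  | cons a s ha ih => rw [Finset.sum_cons, Finset.prod_cons, zpow_add₀ h, ih]

private lemma sum_zero_of_bad {r : ℕ} (hr : 2 ≤ r) {ι : Type*} [Fintype ι] [DecidableEq ι]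
    {ω : ℂ} (hω : IsPrimitiveRoot ω r) (c : ι → ℤ) (i0 : ι) (hbad : ¬ (r:ℤ) ∣ c i0) :
    ∑ α : ι → Fin r, ω ^ (∑ i, ((α i : ℕ) : ℤ) * c i) = 0 := by
  have hrne : r ≠ 0 := by omega
  have hω0 : ω ≠ 0 := by
    intro h
    have h1 := hω.pow_eq_one
    rw [h, zero_pow hrne] at h1
    exact zero_ne_one h1
  have hrw : ∀ α : ι → Fin r, ω ^ (∑ i, ((α i : ℕ) : ℤ) * c i)
      = ∏ i, (ω ^ (c i)) ^ ((α i : ℕ)) := by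
    intro α
    rw [zpow_sum' hω0]
    refine Finset.prod_congr rfl fun i _ => ?_
    rw [mul_comm, zpow_mul, zpow_natCast]
  simp only [hrw]
  rw [← Fintype.prod_sum (fun i (a : Fin r) => (ω ^ c i) ^ (a : ℕ))]
  apply Finset.prod_eq_zero (Finset.mem_univ i0)
  have hζ1 : ω ^ c i0 ≠ 1 := fun h => hbad ((hω.zpow_eq_one_iff_dvd _).mp h)
  have hζr : (ω ^ c i0) ^ r = 1 := by
    rw [← zpow_natCast (ω ^ c i0), ← zpow_mul, mul_comm, zpow_mul, zpow_natCast, hω.pow_eq_one,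
      one_zpow]
  rw [Fin.sum_univ_eq_sum_range (fun a => (ω ^ c i0) ^ a) r, geom_sum_eq hζ1, hζr, sub_self,
    zero_div]

private lemma avg_abs_le_one {ι : Type*} [Fintype ι] [DecidableEq ι] {ω : ℂ}
    (h1 : ‖ω‖ = 1) {r : ℕ} (hr : 2 ≤ r) (c : ι → ℤ) :
    ‖((∑ α : ι → Fin r, ω ^ (∑ i, ((α i : ℕ) : ℤ) * c i))
      / (Fintype.card (ι → Fin r) : ℂ))‖ ≤ 1 := by
  have hne : Nonempty (Fin r) := ⟨⟨0, by omega⟩⟩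
  have hcard : (0:ℝ) < (Fintype.card (ι → Fin r) : ℝ) := by
    exact_mod_cast Fintype.card_pos
  rw [norm_div, Complex.norm_natCast, div_le_one hcard]
  calc ‖(∑ α : ι → Fin r, ω ^ (∑ i, ((α i : ℕ) : ℤ) * c i))‖
      ≤ ∑ α : ι → Fin r, ‖(ω ^ (∑ i, ((α i : ℕ) : ℤ) * c i))‖ :=
        norm_sum_le _ _
    _ = ∑ _α : ι → Fin r, (1:ℝ) := by
        refine Finset.sum_congr rfl fun α _ => ?_
        rw [norm_zpow, h1, one_zpow]
    _ = (Fintype.card (ι → Fin r) : ℝ) := by simp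

private lemma bits1 (W X Y Z W' X' Y' Z' : ℤ)
    (hW : W = 0 ∨ W = 1) (hX : X = 0 ∨ X = 1) (hY : Y = 0 ∨ Y = 1) (hZ : Z = 0 ∨ Z = 1)
    (hW' : W' = 0 ∨ W' = 1) (hX' : X' = 0 ∨ X' = 1) (hY' : Y' = 0 ∨ Y' = 1)
    (hZ' : Z' = 0 ∨ Z' = 1)
    (h1 : (2:ℤ) ∣ (W + X - Y - Z)) (h2 : (2:ℤ) ∣ (W' + X' - Y' - Z'))
    (hp : (2:ℤ) ∣ (W * W' + X * X' - Y * Y' - Z * Z'))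
    (hv : Y ≠ W) (ha : X ≠ W) : Y' = X' := by
  rcases hW with rfl|rfl <;> rcases hX with rfl|rfl <;> rcases hY with rfl|rfl <;>
    rcases hZ with rfl|rfl <;> rcases hW' with rfl|rfl <;> rcases hX' with rfl|rfl <;>
    rcases hY' with rfl|rfl <;> rcases hZ' with rfl|rfl <;> omega

private lemma bits2 (W X Y Z W' X' Y' Z' : ℤ)
    (hW : W = 0 ∨ W = 1) (hX : X = 0 ∨ X = 1) (hY : Y = 0 ∨ Y = 1) (hZ : Z = 0 ∨ Z = 1)
    (hW' : W' = 0 ∨ W' = 1) (hX' : X' = 0 ∨ X' = 1) (hY' : Y' = 0 ∨ Y' = 1)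
    (hZ' : Z' = 0 ∨ Z' = 1)
    (h1 : (2:ℤ) ∣ (W + X - Y - Z)) (h2 : (2:ℤ) ∣ (W' + X' - Y' - Z'))
    (hp : (2:ℤ) ∣ (W * W' + X * X' - Y * Y' - Z * Z'))
    (hv : Y ≠ W) (ha : X = W) : X' = W' := by
  rcases hW with rfl|rfl <;> rcases hX with rfl|rfl <;> rcases hY with rfl|rfl <;>
    rcases hZ with rfl|rfl <;> rcases hW' with rfl|rfl <;> rcases hX' with rfl|rfl <;>
    rcases hY' with rfl|rfl <;> rcases hZ' with rfl|rfl <;> omega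

private lemma combin_int (n r s : ℕ) (hr : 2 ≤ r) (hs : 2 ≤ s) (hrs : s = 2 → r = 2)
    (W X Y Z : Fin n → ℤ)
    (hWb : ∀ k, W k = 0 ∨ W k = 1) (hXb : ∀ k, X k = 0 ∨ X k = 1)
    (hYb : ∀ k, Y k = 0 ∨ Y k = 1) (hZb : ∀ k, Z k = 0 ∨ Z k = 1)
    (hc : ∀ i j, i ≠ j → (r:ℤ) ∣ (W i * W j + X i * X j - Y i * Y j - Z i * Z j))
    (hd : ∀ k, (s:ℤ) ∣ (W k + X k - Y k - Z k)) :
    (∀ k, Y k = W k ∧ Z k = X k) ∨ (∀ k, Y k = X k ∧ Z k = W k) ∨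
      (∀ k, X k = W k ∧ Z k = Y k) := by
  by_cases hs2 : s = 2
  · -- s = 2 hence r = 2
    have hr2 := hrs hs2
    subst hs2; subst hr2
    have hd2 : ∀ k, (2:ℤ) ∣ (W k + X k - Y k - Z k) := by
      intro k; exact_mod_cast hd k
    have hc2 : ∀ i j, i ≠ j → (2:ℤ) ∣ (W i * W j + X i * X j - Y i * Y j - Z i * Z j) := by
      intro i j hij; exact_mod_cast hc i j hij
    by_contra hcon
    have h1 : ¬ ∀ k, Y k = W k ∧ Z k = X k := fun h => hcon (Or.inl h)
    have h2 : ¬ ∀ k, Y k = X k ∧ Z k = W k := fun h => hcon (Or.inr (Or.inl h))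
    have h3 : ¬ ∀ k, X k = W k ∧ Z k = Y k := fun h => hcon (Or.inr (Or.inr h))
    have hpar : ∀ k, (Y k = W k → Z k = X k) ∧ (Y k = X k → Z k = W k) ∧
        (X k = W k → Z k = Y k) := by
      intro k
      have := hd2 k; have := hWb k; have := hXb k; have := hYb k; have := hZb k
      omega
    obtain ⟨i, hi⟩ := not_forall.mp h1
    obtain ⟨j, hj⟩ := not_forall.mp h2
    obtain ⟨l, hl⟩ := not_forall.mp h3
    have hvi : Y i ≠ W i := fun h => hi ⟨h, (hpar i).1 h⟩
    have hvj : Y j ≠ X j := fun h => hj ⟨h, (hpar j).2.1 h⟩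
    have hal : X l ≠ W l := fun h => hl ⟨h, (hpar l).2.2 h⟩
    by_cases hai : X i = W i
    · have hil : i ≠ l := fun h => hal (h ▸ hai)
      exact hal (bits2 (W i) (X i) (Y i) (Z i) (W l) (X l) (Y l) (Z l)
        (hWb i) (hXb i) (hYb i) (hZb i) (hWb l) (hXb l) (hYb l) (hZb l)
        (hd2 i) (hd2 l) (hc2 i l hil) hvi hai)
    · have hij : i ≠ j := by
        intro h; subst h
        have := hWb i; have := hXb i; have := hYb i
        omega
      exact hvj (bits1 (W i) (X i) (Y i) (Z i) (W j) (X j) (Y j) (Z j)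
        (hWb i) (hXb i) (hYb i) (hZb i) (hWb j) (hXb j) (hYb j) (hZb j)
        (hd2 i) (hd2 j) (hc2 i j hij) hvi hai)
  · -- s ≥ 3
    have hs3 : 3 ≤ s := by omega
    have hd0 : ∀ k, W k + X k = Y k + Z k := by
      intro k
      by_contra hne
      have hne' : W k + X k - Y k - Z k ≠ 0 := by omega
      have hle : (s:ℤ) ≤ |W k + X k - Y k - Z k| :=
        Int.le_of_dvd (abs_pos.mpr hne') ((dvd_abs _ _).mpr (hd k))
      have habs : |W k + X k - Y k - Z k| ≤ 2 := by
        have := hWb k; have := hXb k; have := hYb k; have := hZb k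
        exact abs_le.mpr (by omega)
      have : (s:ℤ) ≤ 2 := le_trans hle habs
      omega
    have hk : ∀ k, (Y k = W k ∧ Z k = X k) ∨ (Y k = X k ∧ Z k = W k) := by
      intro k
      have := hd0 k; have := hWb k; have := hXb k; have := hYb k; have := hZb k
      omega
    by_cases hA : ∀ k, Y k = W k ∧ Z k = X k
    · exact Or.inl hA
    by_cases hB : ∀ k, Y k = X k ∧ Z k = W k
    · exact Or.inr (Or.inl hB)
    exfalso
    obtain ⟨i, hi⟩ := not_forall.mp hA
    obtain ⟨j, hj⟩ := not_forall.mp hB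
    obtain ⟨hyi, hzi, hwxi⟩ : Y i = X i ∧ Z i = W i ∧ W i ≠ X i := by
      have := hk i; have := hWb i; have := hXb i; have := hYb i; have := hZb i
      omega
    obtain ⟨hyj, hzj, hwxj⟩ : Y j = W j ∧ Z j = X j ∧ W j ≠ X j := by
      have := hk j; have := hWb j; have := hXb j; have := hYb j; have := hZb j
      omega
    have hij : i ≠ j := by
      intro h; subst h; omega
    have hdvd := hc i j hij
    rw [hyi, hyj, hzi, hzj] at hdvd
    have hval : W i * W j + X i * X j - X i * W j - W i * X j = 1 ∨
        W i * W j + X i * X j - X i * W j - W i * X j = -1 := by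
      rcases hWb i with h|h <;> rcases hXb i with h'|h' <;> rcases hWb j with h''|h'' <;>
        rcases hXb j with h'''|h''' <;> rw [h, h', h'', h'''] <;> omega
    have hdvd1 : (r:ℤ) ∣ 1 := by
      rcases hval with h|h
      · rwa [h] at hdvd
      · rw [h] at hdvd; exact (dvd_neg).mp hdvd
    have := Int.le_of_dvd one_pos hdvd1
    omega

private lemma combin (n r s : ℕ) (hr : 2 ≤ r) (hs : 2 ≤ s) (hrs : s = 2 → r = 2)
    (w x y z : Fin n → Fin 2)
    (hc : ∀ p : {p : Fin n × Fin n // p.1 < p.2}, (r:ℤ) ∣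
      (((w p.1.1 : ℕ) : ℤ) * ((w p.1.2 : ℕ) : ℤ) + ((x p.1.1 : ℕ) : ℤ) * ((x p.1.2 : ℕ) : ℤ)
        - ((y p.1.1 : ℕ) : ℤ) * ((y p.1.2 : ℕ) : ℤ)
        - ((z p.1.1 : ℕ) : ℤ) * ((z p.1.2 : ℕ) : ℤ)))
    (hd : ∀ k : Fin n, (s:ℤ) ∣
      (((w k : ℕ) : ℤ) + ((x k : ℕ) : ℤ) - ((y k : ℕ) : ℤ) - ((z k : ℕ) : ℤ))) :
    (y = w ∧ z = x) ∨ (y = x ∧ z = w) ∨ (x = w ∧ z = y) := by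
  have feq : ∀ a b : Fin 2, ((a:ℕ):ℤ) = ((b:ℕ):ℤ) → a = b := by decide
  have hbits : ∀ u : Fin n → Fin 2, ∀ k, ((u k : ℕ):ℤ) = 0 ∨ ((u k : ℕ):ℤ) = 1 := by
    intro u k; have := (u k).isLt; omega
  have hc' : ∀ i j : Fin n, i ≠ j → (r:ℤ) ∣
      (((w i : ℕ):ℤ) * ((w j : ℕ):ℤ) + ((x i : ℕ):ℤ) * ((x j : ℕ):ℤ)
        - ((y i : ℕ):ℤ) * ((y j : ℕ):ℤ) - ((z i : ℕ):ℤ) * ((z j : ℕ):ℤ)) := by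
    intro i j hij
    rcases lt_or_gt_of_ne hij with h|h
    · exact hc ⟨(i,j), h⟩
    · have h2 := hc ⟨(j,i), h⟩
      have e : ((w i : ℕ):ℤ) * ((w j : ℕ):ℤ) + ((x i : ℕ):ℤ) * ((x j : ℕ):ℤ)
          - ((y i : ℕ):ℤ) * ((y j : ℕ):ℤ) - ((z i : ℕ):ℤ) * ((z j : ℕ):ℤ)
          = ((w j : ℕ):ℤ) * ((w i : ℕ):ℤ) + ((x j : ℕ):ℤ) * ((x i : ℕ):ℤ)
          - ((y j : ℕ):ℤ) * ((y i : ℕ):ℤ) - ((z j : ℕ):ℤ) * ((z i : ℕ):ℤ) := by ring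
      rw [e]
      exact h2
  rcases combin_int n r s hr hs hrs (fun k => ((w k : ℕ):ℤ)) (fun k => ((x k : ℕ):ℤ))
      (fun k => ((y k : ℕ):ℤ)) (fun k => ((z k : ℕ):ℤ)) (hbits w) (hbits x) (hbits y) (hbits z)
      hc' hd with h|h|h
  · exact Or.inl ⟨funext fun k => feq _ _ (h k).1, funext fun k => feq _ _ (h k).2⟩
  · exact Or.inr (Or.inl ⟨funext fun k => feq _ _ (h k).1, funext fun k => feq _ _ (h k).2⟩)
  · exact Or.inr (Or.inr ⟨funext fun k => feq _ _ (h k).1, funext fun k => feq _ _ (h k).2⟩)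

/-- The root-of-unity anticoncentration lemma (Lemma 5 of the paper):
for `ω = e^{2πi/r}`, `η = e^{2πi/s}` with `r, s ≥ 2` and (`s = 2 → r = 2`),
with `α_{ij}` (for `i < j`) uniform on `{0,…,r-1}` and `β_k` uniform on
`{0,…,s-1}`, the sum over `w,x,y,z ∈ {0,1}ⁿ` of the modulus of
`E_α[ω^{Σ_{i<j} α_{ij}(w_iw_j + x_ix_j - y_iy_j - z_iz_j)}] ·
 E_β[η^{Σ_k β_k(w_k + x_k - y_k - z_k)}]` is at most `3·2^{2n}`. -/
theorem root_of_unity_anticoncentration (n r s : ℕ) (hn : 0 < n)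
    (hr : 2 ≤ r) (hs : 2 ≤ s) (hrs : s = 2 → r = 2)
    (ω η : ℂ)
    (hω : ω = Complex.exp (2 * Real.pi * Complex.I / r))
    (hη : η = Complex.exp (2 * Real.pi * Complex.I / s)) :
    ∑ w : Fin n → Fin 2, ∑ x : Fin n → Fin 2, ∑ y : Fin n → Fin 2,
      ∑ z : Fin n → Fin 2,
      norm
        (((∑ α : {p : Fin n × Fin n // p.1 < p.2} → Fin r,
            ω ^ (∑ p : {p : Fin n × Fin n // p.1 < p.2}, ((α p : ℕ) : ℤ) *
              (((w p.1.1 : ℕ) : ℤ) * ((w p.1.2 : ℕ) : ℤ)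
                + ((x p.1.1 : ℕ) : ℤ) * ((x p.1.2 : ℕ) : ℤ)
                - ((y p.1.1 : ℕ) : ℤ) * ((y p.1.2 : ℕ) : ℤ)
                - ((z p.1.1 : ℕ) : ℤ) * ((z p.1.2 : ℕ) : ℤ))))
            / (Fintype.card ({p : Fin n × Fin n // p.1 < p.2} → Fin r) : ℂ))
          * ((∑ β : Fin n → Fin s,
              η ^ (∑ k : Fin n, ((β k : ℕ) : ℤ) *
                (((w k : ℕ) : ℤ) + ((x k : ℕ) : ℤ)
                  - ((y k : ℕ) : ℤ) - ((z k : ℕ) : ℤ))))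
            / (Fintype.card (Fin n → Fin s) : ℂ)))
      ≤ 3 * 2 ^ (2 * n) := by
  have hr0 : r ≠ 0 := by omega
  have hs0 : s ≠ 0 := by omega
  have hωprim : IsPrimitiveRoot ω r := hω ▸ Complex.isPrimitiveRoot_exp r hr0
  have hηprim : IsPrimitiveRoot η s := hη ▸ Complex.isPrimitiveRoot_exp s hs0
  have hωabs : ‖ω‖ = 1 := by
    rw [hω, show 2 * (Real.pi : ℂ) * Complex.I / (r:ℂ)
      = ((2 * Real.pi / r : ℝ) : ℂ) * Complex.I by push_cast; ring,
      Complex.norm_exp_ofReal_mul_I]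
  have hηabs : ‖η‖ = 1 := by
    rw [hη, show 2 * (Real.pi : ℂ) * Complex.I / (s:ℂ)
      = ((2 * Real.pi / s : ℝ) : ℂ) * Complex.I by push_cast; ring,
      Complex.norm_exp_ofReal_mul_I]
  have key : ∀ w x y z : Fin n → Fin 2,
      norm
        (((∑ α : {p : Fin n × Fin n // p.1 < p.2} → Fin r,
            ω ^ (∑ p : {p : Fin n × Fin n // p.1 < p.2}, ((α p : ℕ) : ℤ) *
              (((w p.1.1 : ℕ) : ℤ) * ((w p.1.2 : ℕ) : ℤ)
                + ((x p.1.1 : ℕ) : ℤ) * ((x p.1.2 : ℕ) : ℤ)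
                - ((y p.1.1 : ℕ) : ℤ) * ((y p.1.2 : ℕ) : ℤ)
                - ((z p.1.1 : ℕ) : ℤ) * ((z p.1.2 : ℕ) : ℤ))))
            / (Fintype.card ({p : Fin n × Fin n // p.1 < p.2} → Fin r) : ℂ))
          * ((∑ β : Fin n → Fin s,
              η ^ (∑ k : Fin n, ((β k : ℕ) : ℤ) *
                (((w k : ℕ) : ℤ) + ((x k : ℕ) : ℤ)
                  - ((y k : ℕ) : ℤ) - ((z k : ℕ) : ℤ))))
            / (Fintype.card (Fin n → Fin s) : ℂ)))
      ≤ (if y = w then (1:ℝ) else 0) * (if z = x then 1 else 0)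
        + (if y = x then 1 else 0) * (if z = w then 1 else 0)
        + (if x = w then 1 else 0) * (if z = y then 1 else 0) := by
    intro w x y z
    by_cases hgood : (y = w ∧ z = x) ∨ (y = x ∧ z = w) ∨ (x = w ∧ z = y)
    · have h1 := avg_abs_le_one (ι := {p : Fin n × Fin n // p.1 < p.2}) hωabs hr
        (fun p => (((w p.1.1 : ℕ) : ℤ) * ((w p.1.2 : ℕ) : ℤ)
                + ((x p.1.1 : ℕ) : ℤ) * ((x p.1.2 : ℕ) : ℤ)
                - ((y p.1.1 : ℕ) : ℤ) * ((y p.1.2 : ℕ) : ℤ)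
                - ((z p.1.1 : ℕ) : ℤ) * ((z p.1.2 : ℕ) : ℤ)))
      have h2 := avg_abs_le_one (ι := Fin n) hηabs hs
        (fun k => (((w k : ℕ) : ℤ) + ((x k : ℕ) : ℤ)
                  - ((y k : ℕ) : ℤ) - ((z k : ℕ) : ℤ)))
      have habs : norm
          (((∑ α : {p : Fin n × Fin n // p.1 < p.2} → Fin r,
            ω ^ (∑ p : {p : Fin n × Fin n // p.1 < p.2}, ((α p : ℕ) : ℤ) *
              (((w p.1.1 : ℕ) : ℤ) * ((w p.1.2 : ℕ) : ℤ)
                + ((x p.1.1 : ℕ) : ℤ) * ((x p.1.2 : ℕ) : ℤ)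
                - ((y p.1.1 : ℕ) : ℤ) * ((y p.1.2 : ℕ) : ℤ)
                - ((z p.1.1 : ℕ) : ℤ) * ((z p.1.2 : ℕ) : ℤ))))
            / (Fintype.card ({p : Fin n × Fin n // p.1 < p.2} → Fin r) : ℂ))
          * ((∑ β : Fin n → Fin s,
              η ^ (∑ k : Fin n, ((β k : ℕ) : ℤ) *
                (((w k : ℕ) : ℤ) + ((x k : ℕ) : ℤ)
                  - ((y k : ℕ) : ℤ) - ((z k : ℕ) : ℤ))))
            / (Fintype.card (Fin n → Fin s) : ℂ))) ≤ 1 := by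
        rw [norm_mul]
        calc ‖_‖ * ‖_‖ ≤ (1:ℝ) * 1 :=
              mul_le_mul h1 h2 (norm_nonneg _) zero_le_one
          _ = 1 := one_mul 1
      have n1 := mul_nonneg (ite_nonneg' (y = w)) (ite_nonneg' (z = x))
      have n2 := mul_nonneg (ite_nonneg' (y = x)) (ite_nonneg' (z = w))
      have n3 := mul_nonneg (ite_nonneg' (x = w)) (ite_nonneg' (z = y))
      rcases hgood with ⟨h, h'⟩ | ⟨h, h'⟩ | ⟨h, h'⟩ <;> rw [if_pos h, if_pos h'] <;>
        linarith
    · have hbad : (∃ p : {p : Fin n × Fin n // p.1 < p.2}, ¬ (r:ℤ) ∣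
          (((w p.1.1 : ℕ) : ℤ) * ((w p.1.2 : ℕ) : ℤ)
            + ((x p.1.1 : ℕ) : ℤ) * ((x p.1.2 : ℕ) : ℤ)
            - ((y p.1.1 : ℕ) : ℤ) * ((y p.1.2 : ℕ) : ℤ)
            - ((z p.1.1 : ℕ) : ℤ) * ((z p.1.2 : ℕ) : ℤ)))
          ∨ (∃ k : Fin n, ¬ (s:ℤ) ∣
          (((w k : ℕ) : ℤ) + ((x k : ℕ) : ℤ) - ((y k : ℕ) : ℤ) - ((z k : ℕ) : ℤ))) := by
        by_contra hh
        push_neg at hh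
        exact hgood (combin n r s hr hs hrs w x y z hh.1 hh.2)
      have n1 := mul_nonneg (ite_nonneg' (y = w)) (ite_nonneg' (z = x))
      have n2 := mul_nonneg (ite_nonneg' (y = x)) (ite_nonneg' (z = w))
      have n3 := mul_nonneg (ite_nonneg' (x = w)) (ite_nonneg' (z = y))
      rcases hbad with ⟨p0, hp0⟩ | ⟨k0, hk0⟩
      · rw [sum_zero_of_bad hr hωprim
          (fun p : {p : Fin n × Fin n // p.1 < p.2} =>
            (((w p.1.1 : ℕ) : ℤ) * ((w p.1.2 : ℕ) : ℤ)
              + ((x p.1.1 : ℕ) : ℤ) * ((x p.1.2 : ℕ) : ℤ)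
              - ((y p.1.1 : ℕ) : ℤ) * ((y p.1.2 : ℕ) : ℤ)
              - ((z p.1.1 : ℕ) : ℤ) * ((z p.1.2 : ℕ) : ℤ))) p0 hp0]
        simp only [zero_div, zero_mul, norm_zero]
        linarith
      · rw [sum_zero_of_bad hs hηprim
          (fun k : Fin n => (((w k : ℕ) : ℤ) + ((x k : ℕ) : ℤ)
            - ((y k : ℕ) : ℤ) - ((z k : ℕ) : ℤ))) k0 hk0]
        simp only [zero_div, mul_zero, norm_zero]
        linarith
  calc ∑ w : Fin n → Fin 2, ∑ x : Fin n → Fin 2, ∑ y : Fin n → Fin 2,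
      ∑ z : Fin n → Fin 2,
      norm
        (((∑ α : {p : Fin n × Fin n // p.1 < p.2} → Fin r,
            ω ^ (∑ p : {p : Fin n × Fin n // p.1 < p.2}, ((α p : ℕ) : ℤ) *
              (((w p.1.1 : ℕ) : ℤ) * ((w p.1.2 : ℕ) : ℤ)
                + ((x p.1.1 : ℕ) : ℤ) * ((x p.1.2 : ℕ) : ℤ)
                - ((y p.1.1 : ℕ) : ℤ) * ((y p.1.2 : ℕ) : ℤ)
                - ((z p.1.1 : ℕ) : ℤ) * ((z p.1.2 : ℕ) : ℤ))))
            / (Fintype.card ({p : Fin n × Fin n // p.1 < p.2} → Fin r) : ℂ))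
          * ((∑ β : Fin n → Fin s,
              η ^ (∑ k : Fin n, ((β k : ℕ) : ℤ) *
                (((w k : ℕ) : ℤ) + ((x k : ℕ) : ℤ)
                  - ((y k : ℕ) : ℤ) - ((z k : ℕ) : ℤ))))
            / (Fintype.card (Fin n → Fin s) : ℂ)))
      ≤ ∑ w : Fin n → Fin 2, ∑ x : Fin n → Fin 2, ∑ y : Fin n → Fin 2,
          ∑ z : Fin n → Fin 2,
          ((if y = w then (1:ℝ) else 0) * (if z = x then 1 else 0)
            + (if y = x then 1 else 0) * (if z = w then 1 else 0)
            + (if x = w then 1 else 0) * (if z = y then 1 else 0)) := by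
        refine Finset.sum_le_sum fun w _ => Finset.sum_le_sum fun x _ =>
          Finset.sum_le_sum fun y _ => Finset.sum_le_sum fun z _ => key w x y z
    _ = 3 * 2 ^ (2 * n) := by
        simp only [Finset.sum_add_distrib, ← Finset.mul_sum, Finset.sum_ite_eq',
          Finset.mem_univ, if_true, mul_one, Finset.sum_const, Finset.card_univ, smul_eq_mul]
        simp [Fintype.card_fun, two_mul, pow_add]
        ring
end

section
/- Let f : {0,1}ⁿ → F₂ be a polynomial of the form f(x) = Σ_{i<j<k} α_{ijk} x_i x_j x_k + Σ_{i<j} β_{ij} x_i x_j + Σ_i γ_i x_i with the α coefficients arbitrary but fixed and the β and γ coefficients chosen independently and uniformly at random from {0,1}. Then E[ngap(f)⁴] ≤ 3·2^{-2n}, where ngap(f) = (1/2ⁿ)·Σ_x (-1)^{f(x)}. -/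
open Finset

/-!
Expand the fourth power: `∑_{β,γ} ngap(f)⁴` becomes a sum over quadruples `(a, b, c, d)` of
points of the character sum `∑_{β,γ} (-1)^{f(a)+f(b)+f(c)+f(d)}`. The random part of `f` is
`(β, γ) ⬝ m(x)`, where `m(x)` lists the monomials `x_i x_j` (`i < j`) and `x_i`, so by
orthogonality of characters this sum vanishes unless `m(a) + m(b) + m(c) + m(d) = 0`, and it is
always at most the number of choices of `(β, γ)`. Over `F₂` that condition forces the quadruple
to split into two equal pairs: with `u = a + b`, `v = a + c` and `d = a + b + c`, the quadratic
part reads `u_i v_j = u_j v_i`, so `u = 0`, `v = 0` or `u = v`. At most `3 · 2^{2n}` quadruples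
split this way.
-/

namespace AddChar

lemma map_sum_eq_prod {A M ι : Type*} [AddCommMonoid A] [CommMonoid M] (ψ : AddChar A M)
    (s : Finset ι) (f : ι → A) : ψ (∑ i ∈ s, f i) = ∏ i ∈ s, ψ (f i) := by
  classical
  induction s using Finset.induction_on with
  | empty => simp
  | insert i s hi ih => rw [sum_insert hi, prod_insert hi, map_add_eq_mul, ih]

theorem sum_apply_dotProduct {R R' ι : Type*} [CommRing R] [Fintype R] [DecidableEq R]
    [CommRing R'] [IsDomain R'] [Fintype ι] [DecidableEq ι] {ψ : AddChar R R'}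
    (hψ : IsPrimitive ψ) (v : ι → R) :
    ∑ ω : ι → R, ψ (ω ⬝ᵥ v) = if v = 0 then (Fintype.card R : R') ^ Fintype.card ι else 0 := by
  simp_rw [dotProduct, map_sum_eq_prod]
  rw [← Fintype.prod_sum fun i c => ψ (c * v i)]
  simp_rw [sum_mulShift _ hψ, Nat.cast_ite, Nat.cast_zero, Fintype.prod_ite_zero, prod_const,
    card_univ, ← funext_iff]
  rfl

end AddChar

lemma Fintype.sum_sum_sumElim {α β γ M : Type*} [Fintype α] [Fintype β] [Fintype γ]
    [DecidableEq α] [DecidableEq β] [AddCommMonoid M] (f : (α ⊕ β → γ) → M) :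
    ∑ a : α → γ, ∑ b : β → γ, f (Sum.elim a b) = ∑ ω, f ω := by
  rw [← Fintype.sum_prod_type']
  exact Fintype.sum_equiv (Equiv.sumArrowEquivProdArrow _ _ _).symm _ _ fun _ => rfl

def signChar : AddChar (ZMod 2) ℝ where
  toFun a := if a = 0 then 1 else -1
  map_zero_eq_one' := if_pos rfl
  map_add_eq_mul' a b := by
    have h : ∀ c : ZMod 2, c = 0 ∨ c = 1 := by decide
    rcases h a with rfl | rfl <;> rcases h b with rfl | rfl <;>
      simp only [add_zero, zero_add, show (1 : ZMod 2) + 1 = 0 from rfl] <;> norm_num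

lemma signChar_apply (a : ZMod 2) : signChar a = if a = 0 then 1 else -1 := rfl

lemma signChar_le_one (a : ZMod 2) : signChar a ≤ 1 := by
  rw [signChar_apply]; split_ifs <;> norm_num

lemma isPrimitive_signChar : signChar.IsPrimitive :=
  AddChar.IsPrimitive.of_ne_one (DFunLike.ne_iff.2 ⟨1, by norm_num [signChar_apply]⟩)

def IsPaired {V : Type*} (t : Fin 4 → V) : Prop :=
  (t 0 = t 1 ∧ t 2 = t 3) ∨ (t 0 = t 2 ∧ t 1 = t 3) ∨ (t 0 = t 3 ∧ t 1 = t 2)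

instance {V : Type*} [DecidableEq V] (t : Fin 4 → V) : Decidable (IsPaired t) :=
  inferInstanceAs (Decidable (_ ∨ _ ∨ _))

lemma card_filter_isPaired_le {V : Type*} [Fintype V] [DecidableEq V] :
    #{t : Fin 4 → V | IsPaired t} ≤ 3 * Fintype.card V ^ 2 := by
  let f₁ : V × V → Fin 4 → V := fun p => ![p.1, p.1, p.2, p.2]
  let f₂ : V × V → Fin 4 → V := fun p => ![p.1, p.2, p.1, p.2]
  let f₃ : V × V → Fin 4 → V := fun p => ![p.1, p.2, p.2, p.1]
  have hsub : ({t : Fin 4 → V | IsPaired t} : Finset _) ⊆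
      univ.image f₁ ∪ univ.image f₂ ∪ univ.image f₃ := by
    intro t ht
    simp only [mem_filter, mem_univ, true_and] at ht
    simp only [mem_union, mem_image, mem_univ, true_and, Prod.exists]
    rcases ht with ⟨h₁, h₂⟩ | ⟨h₁, h₂⟩ | ⟨h₁, h₂⟩
    · exact .inl (.inl ⟨t 0, t 2, funext fun i => by fin_cases i <;> simp [f₁, h₁, h₂]⟩)
    · exact .inl (.inr ⟨t 0, t 1, funext fun i => by fin_cases i <;> simp [f₂, h₁, h₂]⟩)
    · exact .inr ⟨t 0, t 1, funext fun i => by fin_cases i <;> simp [f₃, h₁, h₂]⟩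
  have hcard (f : V × V → Fin 4 → V) : #(univ.image f) ≤ Fintype.card V ^ 2 :=
    card_image_le.trans_eq (by simp [sq])
  calc #{t : Fin 4 → V | IsPaired t}
      ≤ #(univ.image f₁ ∪ univ.image f₂ ∪ univ.image f₃) := card_le_card hsub
    _ ≤ #(univ.image f₁) + #(univ.image f₂) + #(univ.image f₃) :=
        (card_union_le _ _).trans (by gcongr; exact card_union_le _ _)
    _ ≤ 3 * Fintype.card V ^ 2 := by linarith [hcard f₁, hcard f₂, hcard f₃]

theorem sum_pow_four_sum_signChar_le {V κ : Type*} [Fintype V] [DecidableEq V]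
    [Fintype κ] [DecidableEq κ] (A : V → ZMod 2) (φ : V → κ → ZMod 2)
    (hφ : ∀ t : Fin 4 → V, ∑ k, φ (t k) = 0 → IsPaired t) :
    ∑ ω : κ → ZMod 2, (∑ x, signChar (A x + ω ⬝ᵥ φ x)) ^ 4
      ≤ 3 * Fintype.card V ^ 2 * 2 ^ Fintype.card κ := by
  have hquadruple (t : Fin 4 → V) :
      ∑ ω : κ → ZMod 2, ∏ k, signChar (A (t k) + ω ⬝ᵥ φ (t k))
        ≤ if IsPaired t then 2 ^ Fintype.card κ else 0 := by
    have orthogonality : ∑ ω : κ → ZMod 2, ∏ k, signChar (A (t k) + ω ⬝ᵥ φ (t k))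
        = signChar (∑ k, A (t k)) * if ∑ k, φ (t k) = 0 then 2 ^ Fintype.card κ else 0 := by
      simp_rw [← AddChar.map_sum_eq_prod, sum_add_distrib, ← dotProduct_sum,
        AddChar.map_add_eq_mul, ← mul_sum, AddChar.sum_apply_dotProduct isPrimitive_signChar,
        ZMod.card]
      norm_num
    rw [orthogonality]
    split_ifs with hzero hpaired
    · simpa using signChar_le_one _
    · exact absurd (hφ t hzero) hpaired
    all_goals simp
  calc ∑ ω : κ → ZMod 2, (∑ x, signChar (A x + ω ⬝ᵥ φ x)) ^ 4
      = ∑ t : Fin 4 → V, ∑ ω : κ → ZMod 2, ∏ k, signChar (A (t k) + ω ⬝ᵥ φ (t k)) := by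
        simp_rw [Fintype.sum_pow]; exact sum_comm
    _ ≤ ∑ t : Fin 4 → V, if IsPaired t then (2 : ℝ) ^ Fintype.card κ else 0 :=
        sum_le_sum fun t _ => hquadruple t
    _ = #{t : Fin 4 → V | IsPaired t} * 2 ^ Fintype.card κ := by
        rw [sum_ite, sum_const_zero, add_zero, sum_const, nsmul_eq_mul]
    _ ≤ 3 * Fintype.card V ^ 2 * 2 ^ Fintype.card κ := by
        gcongr; exact_mod_cast card_filter_isPaired_le

lemma eq_zero_or_eq_zero_or_eq_of_forall_mul_eq_mul {ι : Type*} {u v : ι → ZMod 2}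
    (h : ∀ i j, u i * v j = u j * v i) : u = 0 ∨ v = 0 ∨ u = v := by
  have eq_one_of_ne_zero : ∀ a : ZMod 2, a ≠ 0 → a = 1 := by decide
  by_cases hu : u = 0
  · exact .inl hu
  obtain ⟨i, hi⟩ := Function.ne_iff.1 hu
  replace hi := eq_one_of_ne_zero _ hi
  by_cases hv : v i = 0
  · refine .inr (.inl (funext fun j => ?_))
    simpa [hi, hv] using h i j
  · replace hv := eq_one_of_ne_zero _ hv
    refine .inr (.inr (funext fun j => ?_))
    simpa [hi, hv] using (h i j).symm

def degLeTwoMonomials {ι : Type*} [LinearOrder ι] (x : ι → ZMod 2) :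
    {p : ι × ι // p.1 < p.2} ⊕ ι → ZMod 2 :=
  Sum.elim (fun p => x p.1.1 * x p.1.2) x

lemma sumElim_dotProduct_degLeTwoMonomials {ι : Type*} [LinearOrder ι] [Fintype ι]
    (β : {p : ι × ι // p.1 < p.2} → ZMod 2) (γ x : ι → ZMod 2) :
    Sum.elim β γ ⬝ᵥ degLeTwoMonomials x = ∑ p, β p * x p.1.1 * x p.1.2 + ∑ i, γ i * x i := by
  rw [degLeTwoMonomials, sumElim_dotProduct_sumElim]
  simp only [dotProduct, mul_assoc]

lemma isPaired_of_sum_degLeTwoMonomials_eq_zero {ι : Type*} [LinearOrder ι]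
    (t : Fin 4 → ι → ZMod 2) (h : ∑ k, degLeTwoMonomials (t k) = 0) : IsPaired t := by
  have hlin (i : ι) : t 0 i + t 1 i + t 2 i + t 3 i = 0 := by
    simpa [degLeTwoMonomials, Fin.sum_univ_four] using congrFun h (.inr i)
  have hquad (i j : ι) (hij : i < j) :
      t 0 i * t 0 j + t 1 i * t 1 j + t 2 i * t 2 j + t 3 i * t 3 j = 0 := by
    simpa [degLeTwoMonomials, Fin.sum_univ_four] using congrFun h (.inl ⟨(i, j), hij⟩)
  have hw (i : ι) : t 3 i = t 0 i + t 1 i + t 2 i := by grind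
  have hcomm (i j : ι) :
      (t 0 i + t 1 i) * (t 0 j + t 2 j) = (t 0 j + t 1 j) * (t 0 i + t 2 i) := by
    rcases lt_trichotomy i j with hij | rfl | hij
    · have := hquad i j hij; rw [hw, hw] at this; grind
    · rfl
    · have := hquad j i hij; rw [hw, hw] at this; grind
  rcases eq_zero_or_eq_zero_or_eq_of_forall_mul_eq_mul hcomm with h | h | h <;>
    simp only [funext_iff, Pi.zero_apply] at h
  · exact .inl ⟨funext fun i => by grind, funext fun i => by grind⟩
  · exact .inr (.inl ⟨funext fun i => by grind, funext fun i => by grind⟩)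
  · exact .inr (.inr ⟨funext fun i => by grind, funext fun i => by grind⟩)

theorem fourth_moment_ngap_deg3_general (n : ℕ)
    (α : {t : Fin n × Fin n × Fin n // t.1 < t.2.1 ∧ t.2.1 < t.2.2} → ZMod 2) :
    (∑ β : {p : Fin n × Fin n // p.1 < p.2} → ZMod 2, ∑ γ : Fin n → ZMod 2,
        ((1 / 2 ^ n : ℝ) * ∑ x : Fin n → ZMod 2,
          (if (∑ t : {t : Fin n × Fin n × Fin n // t.1 < t.2.1 ∧ t.2.1 < t.2.2},
                  α t * x t.1.1 * x t.1.2.1 * x t.1.2.2)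
              + (∑ p : {p : Fin n × Fin n // p.1 < p.2}, β p * x p.1.1 * x p.1.2)
              + (∑ i : Fin n, γ i * x i) = 0 then (1 : ℝ) else -1)) ^ 4)
      / ((Fintype.card ({p : Fin n × Fin n // p.1 < p.2} → ZMod 2) : ℝ)
          * (Fintype.card (Fin n → ZMod 2) : ℝ))
    ≤ 3 / 2 ^ (2 * n) := by
  have hmoment := sum_pow_four_sum_signChar_le
    (fun x => ∑ t : {t : Fin n × Fin n × Fin n // t.1 < t.2.1 ∧ t.2.1 < t.2.2},
      α t * x t.1.1 * x t.1.2.1 * x t.1.2.2)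
    degLeTwoMonomials isPaired_of_sum_degLeTwoMonomials_eq_zero
  rw [← Fintype.sum_sum_sumElim] at hmoment
  simp only [add_assoc, ← sumElim_dotProduct_degLeTwoMonomials, ← signChar_apply, mul_pow,
    ← mul_sum]
  simp only [Fintype.card_fun, Fintype.card_sum, ZMod.card, Fintype.card_fin, Nat.cast_pow,
    Nat.cast_ofNat] at hmoment ⊢
  set m := Fintype.card {p : Fin n × Fin n // p.1 < p.2}
  calc _ ≤ (1 / 2 ^ n) ^ 4 * (3 * ((2 : ℝ) ^ n) ^ 2 * 2 ^ (m + n)) / (2 ^ m * 2 ^ n) := by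
        gcongr
    _ = 3 / 2 ^ (2 * n) := by
      rw [pow_add]
      field_simp
      ring

/-- For a degree-3 polynomial over `F₂` with arbitrary fixed cubic coefficients `α`
and uniformly random quadratic and linear coefficients `β`, `γ`,
the fourth moment of the normalized gap satisfies `E[ngap(f)⁴] ≤ 3·2^{-2n}`. -/
theorem fourth_moment_ngap_deg3 (n : ℕ) (hn : 0 < n)
    (α : {t : Fin n × Fin n × Fin n // t.1 < t.2.1 ∧ t.2.1 < t.2.2} → ZMod 2) :
    (∑ β : {p : Fin n × Fin n // p.1 < p.2} → ZMod 2, ∑ γ : Fin n → ZMod 2,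
        ((1 / 2 ^ n : ℝ) * ∑ x : Fin n → ZMod 2,
          (if (∑ t : {t : Fin n × Fin n × Fin n // t.1 < t.2.1 ∧ t.2.1 < t.2.2},
                  α t * x t.1.1 * x t.1.2.1 * x t.1.2.2)
              + (∑ p : {p : Fin n × Fin n // p.1 < p.2}, β p * x p.1.1 * x p.1.2)
              + (∑ i : Fin n, γ i * x i) = 0 then (1 : ℝ) else -1)) ^ 4)
      / ((Fintype.card ({p : Fin n × Fin n // p.1 < p.2} → ZMod 2) : ℝ)
          * (Fintype.card (Fin n → ZMod 2) : ℝ))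
    ≤ 3 / 2 ^ (2 * n) :=
  fourth_moment_ngap_deg3_general n α
end

section
/- Let ω = e^{iπ/8} and let Z_R = Σ_{x∈{0,1}ⁿ} i^{Σ_{i<j} w_{ij} x_i x_j} e^{(iπ/4)Σ_k v_k x_k} where w_{ij} and v_k are independent and uniformly random in {0,…,7} (equivalently w uniform in {0,…,3}). Then E[|Z_R|⁴] ≤ 3·2^{2n}. -/
open Finset Complex


/-! ### Roots of unity sums -/

lemma hI_prim : IsPrimitiveRoot (Complex.I) 4 := by
  have h := Complex.isPrimitiveRoot_exp 4 (by norm_num)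
  have he : Complex.exp (2 * ↑Real.pi * I / (4:ℕ)) = I := by
    rw [show (2 * ↑Real.pi * I / (4:ℕ) : ℂ) = (↑(Real.pi / 2) : ℂ) * I by push_cast; ring]
    rw [Complex.exp_mul_I]
    push_cast [Real.cos_pi_div_two, Real.sin_pi_div_two]
    simp
  rwa [he] at h

noncomputable def om : ℂ := Complex.exp (↑Real.pi * I / 4)

lemma hom_prim : IsPrimitiveRoot om 8 := by
  have h := Complex.isPrimitiveRoot_exp 8 (by norm_num)
  have he : Complex.exp (2 * ↑Real.pi * I / (8:ℕ)) = om := by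
    rw [om, show (2 * ↑Real.pi * I / (8:ℕ) : ℂ) = ↑Real.pi * I / 4 by push_cast; ring]
  rwa [he] at h

lemma zsum (u : ℂ) (h8 : u ^ 8 = 1) : ∑ c : Fin 8, u ^ (c : ℕ) = if u = 1 then 8 else 0 := by
  rw [Fin.sum_univ_eq_sum_range (fun i => u ^ i) 8]
  split_ifs with h
  · subst h; simp
  · rw [geom_sum_eq h, h8]; simp

lemma Isum (b : ℤ) : ∑ c : Fin 8, Complex.I ^ ((c : ℕ) * b) = if (4:ℤ) ∣ b then 8 else 0 := by
  have hc : ∀ c : Fin 8, Complex.I ^ ((c : ℕ) * b) = (Complex.I ^ b) ^ (c : ℕ) := by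
    intro c; rw [mul_comm, zpow_mul, zpow_natCast]
  rw [Finset.sum_congr rfl (fun c _ => hc c)]
  have h8 : (Complex.I ^ b) ^ 8 = 1 := by
    rw [← zpow_natCast, ← zpow_mul, mul_comm b, zpow_mul,
        show ((8:ℕ):ℤ) = 4 * 2 by norm_num, zpow_mul,
        show ((4:ℤ)) = ((4:ℕ):ℤ) by norm_num, zpow_natCast, Complex.I_pow_four, one_zpow, one_zpow]
  rw [zsum _ h8]
  have hiff : Complex.I ^ b = 1 ↔ (4:ℤ) ∣ b := by
    have := (hI_prim).zpow_eq_one_iff_dvd b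
    simpa using this
  by_cases h : (4:ℤ) ∣ b
  · rw [if_pos (hiff.mpr h), if_pos h]
  · rw [if_neg (fun hh => h (hiff.mp hh)), if_neg h]

lemma omsum (a : ℤ) : ∑ c : Fin 8, om ^ ((c : ℕ) * a) = if (8:ℤ) ∣ a then 8 else 0 := by
  have hc : ∀ c : Fin 8, om ^ ((c : ℕ) * a) = (om ^ a) ^ (c : ℕ) := by
    intro c; rw [mul_comm, zpow_mul, zpow_natCast]
  rw [Finset.sum_congr rfl (fun c _ => hc c)]
  have h8 : (om ^ a) ^ 8 = 1 := by
    rw [← zpow_natCast, ← zpow_mul, mul_comm a, zpow_mul, zpow_natCast,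
        hom_prim.pow_eq_one, one_zpow]
  rw [zsum _ h8]
  have hiff : om ^ a = 1 ↔ (8:ℤ) ∣ a := by
    have := (hom_prim).zpow_eq_one_iff_dvd a
    simpa using this
  by_cases h : (8:ℤ) ∣ a
  · rw [if_pos (hiff.mpr h), if_pos h]
  · rw [if_neg (fun hh => h (hiff.mp hh)), if_neg h]

/-! ### Combinatorial key lemma -/

lemma bits1_s8 (a b c d : Fin 2) (h : ((a:ℕ):ℤ) - ((b:ℕ):ℤ) + ((c:ℕ):ℤ) - ((d:ℕ):ℤ) = 0)
    (hne : b ≠ a) : b = c ∧ d = a := by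
  fin_cases a <;> fin_cases b <;> fin_cases c <;> fin_cases d <;> simp_all

lemma bits2_s8 (a b c d a' b' c' d' : Fin 2)
    (h1 : ((a:ℕ):ℤ) - b + c - d = 0) (h2 : ((a':ℕ):ℤ) - b' + c' - d' = 0)
    (hq : ((a:ℕ):ℤ) * a' - ((b:ℕ):ℤ) * b' + ((c:ℕ):ℤ) * c' - ((d:ℕ):ℤ) * d' = 0)
    (hne : b ≠ a) : b' = c' ∧ d' = a' := by
  fin_cases a <;> fin_cases b <;> fin_cases c <;> fin_cases d <;>
    fin_cases a' <;> fin_cases b' <;> fin_cases c' <;> fin_cases d' <;> simp_all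

lemma key {n : ℕ} (x y z t : Fin n → Fin 2)
    (hA : ∀ k, ((x k : ℕ):ℤ) - (y k : ℕ) + (z k : ℕ) - (t k : ℕ) = 0)
    (hB : ∀ i j, i ≠ j →
      ((x i : ℕ):ℤ) * (x j : ℕ) - ((y i : ℕ):ℤ) * (y j : ℕ)
        + ((z i : ℕ):ℤ) * (z j : ℕ) - ((t i : ℕ):ℤ) * (t j : ℕ) = 0) :
    (y = x ∧ t = z) ∨ (y = z ∧ t = x) := by
  by_cases h : ∀ k, y k = x k
  · left
    refine ⟨funext h, funext fun k => ?_⟩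
    have hk := hA k
    rw [h k] at hk
    exact Fin.ext (by omega)
  · push_neg at h
    obtain ⟨i, hi⟩ := h
    right
    have hcoord : ∀ k, y k = z k ∧ t k = x k := by
      intro k
      rcases eq_or_ne k i with rfl | hki
      · exact bits1_s8 _ _ _ _ (hA k) hi
      · exact bits2_s8 (x i) (y i) (z i) (t i) (x k) (y k) (z k) (t k)
          (hA i) (hA k) (hB i k (Ne.symm hki)) hi
    exact ⟨funext fun k => (hcoord k).1, funext fun k => (hcoord k).2⟩

/-! ### Algebraic helpers -/

lemma zpow_sum0 {ι : Type*} {u : ℂ} (hu : u ≠ 0) (s : Finset ι) (f : ι → ℤ) :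
    u ^ (∑ i ∈ s, f i) = ∏ i ∈ s, u ^ f i := by
  classical
  induction s using Finset.induction_on with
  | empty => simp
  | insert _ _ hx ih =>
      rw [Finset.sum_insert hx, Finset.prod_insert hx, zpow_add₀ hu, ih]

lemma prodIndicator {ι : Type*} [Fintype ι] (P : ι → Prop) [DecidablePred P] (c : ℂ) :
    (∏ i, if P i then c else 0) = if (∀ i, P i) then c ^ (Fintype.card ι) else 0 := by
  by_cases h : ∀ i, P i
  · rw [if_pos h]
    rw [Finset.prod_congr rfl (fun i _ => if_pos (h i)), Finset.prod_const]
    simp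
  · rw [if_neg h]
    push_neg at h
    obtain ⟨i, hi⟩ := h
    exact Finset.prod_eq_zero (Finset.mem_univ i) (if_neg hi)

/-! ### The amplitude and its expansion -/

variable {n : ℕ}

def Qf (w : {p : Fin n × Fin n // p.1 < p.2} → Fin 8) (x : Fin n → Fin 2) : ℤ :=
  ∑ p : {p : Fin n × Fin n // p.1 < p.2},
    ((w p : ℕ) : ℤ) * ((x p.1.1 : ℕ) : ℤ) * ((x p.1.2 : ℕ) : ℤ)

def Lf (v : Fin n → Fin 8) (x : Fin n → Fin 2) : ℤ :=
  ∑ k : Fin n, ((v k : ℕ) : ℤ) * ((x k : ℕ) : ℤ)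

noncomputable def ff (w : {p : Fin n × Fin n // p.1 < p.2} → Fin 8) (v : Fin n → Fin 8)
    (x : Fin n → Fin 2) : ℂ :=
  Complex.I ^ (Qf w x) * Complex.exp (Real.pi * Complex.I / 4 * ((Lf v x : ℤ) : ℂ))

def Aq (x y z t : Fin n → Fin 2) (k : Fin n) : ℤ :=
  ((x k : ℕ):ℤ) - ((y k : ℕ):ℤ) + ((z k : ℕ):ℤ) - ((t k : ℕ):ℤ)

def Bq (x y z t : Fin n → Fin 2) (p : {p : Fin n × Fin n // p.1 < p.2}) : ℤ :=
  ((x p.1.1 : ℕ):ℤ) * ((x p.1.2 : ℕ):ℤ) - ((y p.1.1 : ℕ):ℤ) * ((y p.1.2 : ℕ):ℤ)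
    + ((z p.1.1 : ℕ):ℤ) * ((z p.1.2 : ℕ):ℤ) - ((t p.1.1 : ℕ):ℤ) * ((t p.1.2 : ℕ):ℤ)

lemma conj_ff (w v x) : (starRingEnd ℂ) (ff (n := n) w v x) =
    Complex.I ^ (-(Qf w x)) * Complex.exp (Real.pi * Complex.I / 4 * ((-(Lf v x) : ℤ) : ℂ)) := by
  rw [ff, map_mul]
  congr 1
  · rw [map_zpow₀, Complex.conj_I, ← Complex.inv_I, inv_zpow, ← zpow_neg]
  · rw [← Complex.exp_conj]
    congr 1
    simp [map_mul, map_div₀, Complex.conj_I, map_ofNat]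
    ring

lemma quad_sum (F G : (Fin n → Fin 2) → ℂ) :
    (∑ x, F x) * (∑ y, G y) * ((∑ z, F z) * (∑ t, G t)) =
    ∑ x, ∑ y, ∑ z, ∑ t, F x * G y * (F z * G t) := by
  rw [Finset.sum_mul_sum univ univ F G]
  rw [Finset.sum_mul_sum univ univ (fun x => ∑ y, F x * G y) (fun z => ∑ t, F z * G t)]
  refine Finset.sum_congr rfl fun x _ => ?_
  rw [show (∑ z, ((∑ y, F x * G y) * ∑ t, F z * G t)) =
      ∑ z, ∑ y, ∑ t, F x * G y * (F z * G t) from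
    Finset.sum_congr rfl fun z _ => by
      rw [Finset.sum_mul_sum univ univ (fun y => F x * G y) (fun t => F z * G t)]]
  exact Finset.sum_comm

lemma expand4 (w v) :
    ((norm (∑ x : Fin n → Fin 2, ff w v x) ^ 4 : ℝ) : ℂ) =
    ∑ x : Fin n → Fin 2, ∑ y : Fin n → Fin 2, ∑ z : Fin n → Fin 2, ∑ t : Fin n → Fin 2,
      Complex.I ^ (Qf w x - Qf w y + Qf w z - Qf w t) *
        Complex.exp (Real.pi * Complex.I / 4 *
          (((Lf v x - Lf v y + Lf v z - Lf v t : ℤ) : ℂ))) := by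
  set Z := ∑ x : Fin n → Fin 2, ff w v x with hZ
  have h2 : ((‖Z‖ ^ 4 : ℝ) : ℂ) = Z * (starRingEnd ℂ) Z * (Z * (starRingEnd ℂ) Z) := by
    have h4 : (‖Z‖ ^ 4 : ℝ) = (Complex.normSq Z) ^ 2 := by
      rw [← Complex.sq_norm]; ring
    rw [h4]
    push_cast
    rw [← Complex.mul_conj]
    ring
  rw [h2, hZ, map_sum, quad_sum]
  refine Finset.sum_congr rfl fun x _ => Finset.sum_congr rfl fun y _ =>
    Finset.sum_congr rfl fun z _ => Finset.sum_congr rfl fun t _ => ?_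
  rw [conj_ff, conj_ff, ff, ff]
  rw [show Complex.I ^ Qf w x * Complex.exp (Real.pi * Complex.I / 4 * ((Lf v x : ℤ) : ℂ)) *
      (Complex.I ^ (-Qf w y) * Complex.exp (Real.pi * Complex.I / 4 * ((-(Lf v y) : ℤ) : ℂ))) *
      (Complex.I ^ Qf w z * Complex.exp (Real.pi * Complex.I / 4 * ((Lf v z : ℤ) : ℂ)) *
        (Complex.I ^ (-Qf w t) * Complex.exp (Real.pi * Complex.I / 4 * ((-(Lf v t) : ℤ) : ℂ)))) =
      (Complex.I ^ Qf w x * Complex.I ^ (-Qf w y) * Complex.I ^ Qf w z * Complex.I ^ (-Qf w t)) *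
      (Complex.exp (Real.pi * Complex.I / 4 * ((Lf v x : ℤ) : ℂ)) *
       Complex.exp (Real.pi * Complex.I / 4 * ((-(Lf v y) : ℤ) : ℂ)) *
       Complex.exp (Real.pi * Complex.I / 4 * ((Lf v z : ℤ) : ℂ)) *
       Complex.exp (Real.pi * Complex.I / 4 * ((-(Lf v t) : ℤ) : ℂ))) by ring]
  congr 1
  · rw [← zpow_add₀ Complex.I_ne_zero, ← zpow_add₀ Complex.I_ne_zero,
        ← zpow_add₀ Complex.I_ne_zero]
    congr 1
  · rw [← Complex.exp_add, ← Complex.exp_add, ← Complex.exp_add]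
    congr 1
    push_cast
    ring

lemma exp_eq_om (m : ℤ) :
    Complex.exp (Real.pi * Complex.I / 4 * (m : ℂ)) = om ^ m := by
  rw [om, ← Complex.exp_int_mul]
  congr 1
  ring

/-- Summing the character over the random weights. -/
lemma wv_sum (x y z t : Fin n → Fin 2) :
    (∑ w : {p : Fin n × Fin n // p.1 < p.2} → Fin 8, ∑ v : Fin n → Fin 8,
      Complex.I ^ (Qf w x - Qf w y + Qf w z - Qf w t) *
        Complex.exp (Real.pi * Complex.I / 4 *
          (((Lf v x - Lf v y + Lf v z - Lf v t : ℤ) : ℂ)))) =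
    (if (∀ p, (4:ℤ) ∣ Bq x y z t p) ∧ (∀ k, (8:ℤ) ∣ Aq x y z t k)
      then (8:ℂ) ^ (Fintype.card {p : Fin n × Fin n // p.1 < p.2}) * 8 ^ n else 0) := by
  classical
  rw [← Finset.sum_mul_sum]
  have hW : (∑ w : {p : Fin n × Fin n // p.1 < p.2} → Fin 8,
      Complex.I ^ (Qf w x - Qf w y + Qf w z - Qf w t)) =
      (if (∀ p, (4:ℤ) ∣ Bq x y z t p)
        then (8:ℂ) ^ (Fintype.card {p : Fin n × Fin n // p.1 < p.2}) else 0) := by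
    have h1 : ∀ w, Qf w x - Qf w y + Qf w z - Qf w t
        = ∑ p, ((w p : ℕ):ℤ) * Bq x y z t p := by
      intro w
      rw [Qf, Qf, Qf, Qf, ← Finset.sum_sub_distrib, ← Finset.sum_add_distrib,
          ← Finset.sum_sub_distrib]
      exact Finset.sum_congr rfl fun p _ => by rw [Bq]; ring
    calc (∑ w : {p : Fin n × Fin n // p.1 < p.2} → Fin 8,
          Complex.I ^ (Qf w x - Qf w y + Qf w z - Qf w t))
        = ∑ w : {p : Fin n × Fin n // p.1 < p.2} → Fin 8,
            ∏ p, Complex.I ^ (((w p : ℕ):ℤ) * Bq x y z t p) := by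
          refine Finset.sum_congr rfl fun w _ => ?_
          rw [h1 w, zpow_sum0 Complex.I_ne_zero]
      _ = ∏ p : {p : Fin n × Fin n // p.1 < p.2},
            ∑ c : Fin 8, Complex.I ^ (((c : ℕ):ℤ) * Bq x y z t p) := by
          rw [Finset.prod_univ_sum]
          rw [Fintype.piFinset_univ]
      _ = ∏ p : {p : Fin n × Fin n // p.1 < p.2},
            (if (4:ℤ) ∣ Bq x y z t p then (8:ℂ) else 0) := by
          exact Finset.prod_congr rfl fun p _ => Isum (Bq x y z t p)
      _ = _ := prodIndicator _ _
  have hV : (∑ v : Fin n → Fin 8,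
      Complex.exp (Real.pi * Complex.I / 4 *
        (((Lf v x - Lf v y + Lf v z - Lf v t : ℤ) : ℂ)))) =
      (if (∀ k, (8:ℤ) ∣ Aq x y z t k) then (8:ℂ) ^ n else 0) := by
    have h1 : ∀ v, Lf v x - Lf v y + Lf v z - Lf v t
        = ∑ k, ((v k : ℕ):ℤ) * Aq x y z t k := by
      intro v
      rw [Lf, Lf, Lf, Lf, ← Finset.sum_sub_distrib, ← Finset.sum_add_distrib,
          ← Finset.sum_sub_distrib]
      exact Finset.sum_congr rfl fun k _ => by rw [Aq]; ring
    calc (∑ v : Fin n → Fin 8,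
          Complex.exp (Real.pi * Complex.I / 4 *
            (((Lf v x - Lf v y + Lf v z - Lf v t : ℤ) : ℂ))))
        = ∑ v : Fin n → Fin 8, ∏ k, om ^ (((v k : ℕ):ℤ) * Aq x y z t k) := by
          have hom0 : om ≠ 0 := by rw [om]; exact Complex.exp_ne_zero _
          refine Finset.sum_congr rfl fun v _ => ?_
          rw [exp_eq_om, h1 v, zpow_sum0 hom0]
      _ = ∏ k : Fin n, ∑ c : Fin 8, om ^ (((c : ℕ):ℤ) * Aq x y z t k) := by
          rw [Finset.prod_univ_sum]
          rw [Fintype.piFinset_univ]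
      _ = ∏ k : Fin n, (if (8:ℤ) ∣ Aq x y z t k then (8:ℂ) else 0) := by
          exact Finset.prod_congr rfl fun k _ => omsum (Aq x y z t k)
      _ = _ := by rw [prodIndicator]; simp [Fintype.card_fin]
  rw [hW, hV]
  by_cases hP : ∀ p : {p : Fin n × Fin n // p.1 < p.2}, (4:ℤ) ∣ Bq x y z t p <;>
    by_cases hQ : ∀ k, (8:ℤ) ∣ Aq x y z t k <;>
      simp [hP, hQ]

lemma dvd4_zero (a b c d : ℤ) (ha : 0 ≤ a) (ha1 : a ≤ 1) (hb : 0 ≤ b) (hb1 : b ≤ 1)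
    (hc : 0 ≤ c) (hc1 : c ≤ 1) (hd : 0 ≤ d) (hd1 : d ≤ 1)
    (h : (4:ℤ) ∣ a - b + c - d) : a - b + c - d = 0 := by omega

lemma dvd8_zero (a b c d : ℤ) (ha : 0 ≤ a) (ha1 : a ≤ 1) (hb : 0 ≤ b) (hb1 : b ≤ 1)
    (hc : 0 ≤ c) (hc1 : c ≤ 1) (hd : 0 ≤ d) (hd1 : d ≤ 1)
    (h : (8:ℤ) ∣ a - b + c - d) : a - b + c - d = 0 := by omega

lemma ite_sum_count {n : ℕ} (C : ℝ) (x' z' : Fin n → Fin 2) :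
    (∑ y : Fin n → Fin 2, ∑ t : Fin n → Fin 2, if y = x' ∧ t = z' then C else 0) = C := by
  simp [ite_and, Finset.sum_ite_eq', Finset.mem_univ]

-- sum swap helpers
lemma swap_in1 {V X : Type*} [Fintype V] [Fintype X] (G : V → X → ℂ) :
    ∑ v, ∑ t, G v t = ∑ t, ∑ v, G v t := Finset.sum_comm

lemma swap_in2 {V X : Type*} [Fintype V] [Fintype X] (G : V → X → X → ℂ) :
    ∑ v, ∑ z, ∑ t, G v z t = ∑ z, ∑ t, ∑ v, G v z t :=
  (Finset.sum_comm).trans (Finset.sum_congr rfl fun z _ => Finset.sum_comm)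

lemma swap_in3 {V X : Type*} [Fintype V] [Fintype X] (G : V → X → X → X → ℂ) :
    ∑ v, ∑ y, ∑ z, ∑ t, G v y z t = ∑ y, ∑ z, ∑ t, ∑ v, G v y z t :=
  (Finset.sum_comm).trans (Finset.sum_congr rfl fun y _ => swap_in2 (fun v => G v y))

lemma swap_in4 {V X : Type*} [Fintype V] [Fintype X] (G : V → X → X → X → X → ℂ) :
    ∑ v, ∑ x, ∑ y, ∑ z, ∑ t, G v x y z t = ∑ x, ∑ y, ∑ z, ∑ t, ∑ v, G v x y z t :=
  (Finset.sum_comm).trans (Finset.sum_congr rfl fun x _ => swap_in3 (fun v => G v x))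

lemma swap6 {W V X : Type*} [Fintype W] [Fintype V] [Fintype X]
    (F : W → V → X → X → X → X → ℂ) :
    ∑ w, ∑ v, ∑ x, ∑ y, ∑ z, ∑ t, F w v x y z t
      = ∑ x, ∑ y, ∑ z, ∑ t, ∑ w, ∑ v, F w v x y z t := by
  calc ∑ w, ∑ v, ∑ x, ∑ y, ∑ z, ∑ t, F w v x y z t
      = ∑ w, ∑ x, ∑ y, ∑ z, ∑ t, ∑ v, F w v x y z t :=
        Finset.sum_congr rfl fun w _ => swap_in4 (F w)
    _ = ∑ x, ∑ y, ∑ z, ∑ t, ∑ w, ∑ v, F w v x y z t :=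
        swap_in4 (fun w x y z t => ∑ v, F w v x y z t)

lemma cond_key {n : ℕ} (x y z t : Fin n → Fin 2)
    (hP : ∀ p, (4:ℤ) ∣ Bq x y z t p) (hQ : ∀ k, (8:ℤ) ∣ Aq x y z t k) :
    (y = x ∧ t = z) ∨ (y = z ∧ t = x) := by
  have hb : ∀ (u : Fin n → Fin 2) (k : Fin n), ((0:ℤ) ≤ ((u k : ℕ):ℤ)) ∧ ((u k : ℕ):ℤ) ≤ 1 := by
    intro u k
    constructor
    · positivity
    · exact_mod_cast Fin.is_le (u k)
  have hbm : ∀ (u : Fin n → Fin 2) (i j : Fin n),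
      (0:ℤ) ≤ ((u i : ℕ):ℤ) * ((u j : ℕ):ℤ) ∧ ((u i : ℕ):ℤ) * ((u j : ℕ):ℤ) ≤ 1 := by
    intro u i j
    constructor
    · positivity
    · exact mul_le_one₀ (hb u i).2 (hb u j).1 (hb u j).2
  apply key
  · intro k
    have h := hQ k
    rw [Aq] at h
    exact dvd8_zero _ _ _ _ (hb x k).1 (hb x k).2 (hb y k).1 (hb y k).2
      (hb z k).1 (hb z k).2 (hb t k).1 (hb t k).2 h
  · intro i j hij
    rcases lt_or_gt_of_ne hij with hlt | hgt
    · have h := hP ⟨(i, j), hlt⟩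
      rw [Bq] at h
      exact dvd4_zero _ _ _ _ (hbm x i j).1 (hbm x i j).2 (hbm y i j).1 (hbm y i j).2
        (hbm z i j).1 (hbm z i j).2 (hbm t i j).1 (hbm t i j).2 h
    · have h := hP ⟨(j, i), hgt⟩
      rw [Bq] at h
      have h0 := dvd4_zero _ _ _ _ (hbm x j i).1 (hbm x j i).2 (hbm y j i).1 (hbm y j i).2
        (hbm z j i).1 (hbm z j i).2 (hbm t j i).1 (hbm t j i).2 h
      linear_combination h0


/-- For the random Ising-model amplitude
`Z_R = Σ_{x∈{0,1}ⁿ} i^{Σ_{i<j} w_{ij}x_ix_j} e^{(iπ/4)Σ_k v_k x_k}` with the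
weights `w_{ij}`, `v_k` independent and uniform in `{0,…,7}`, the fourth moment
satisfies `E[|Z_R|⁴] ≤ 3·2^{2n}`. -/
theorem ising_fourth_moment (n : ℕ) (hn : 0 < n) :
    (∑ w : {p : Fin n × Fin n // p.1 < p.2} → Fin 8, ∑ v : Fin n → Fin 8,
        (norm (∑ x : Fin n → Fin 2,
          Complex.I ^ (∑ p : {p : Fin n × Fin n // p.1 < p.2},
              ((w p : ℕ) : ℤ) * ((x p.1.1 : ℕ) : ℤ) * ((x p.1.2 : ℕ) : ℤ))
            * Complex.exp (Real.pi * Complex.I / 4 *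
                ((∑ k : Fin n, ((v k : ℕ) : ℤ) * ((x k : ℕ) : ℤ) : ℤ) : ℂ)))) ^ 4)
      / ((Fintype.card ({p : Fin n × Fin n // p.1 < p.2} → Fin 8) : ℝ)
          * (Fintype.card (Fin n → Fin 8) : ℝ))
    ≤ 3 * 2 ^ (2 * n) := by
  classical
  obtain ⟨M, hM⟩ : ∃ m : ℕ, m = Fintype.card {p : Fin n × Fin n // p.1 < p.2} := ⟨_, rfl⟩
  obtain ⟨C, hC⟩ : ∃ c : ℝ, c = (8:ℝ) ^ M * 8 ^ n := ⟨_, rfl⟩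
  have hCpos : 0 < C := by rw [hC]; positivity
  obtain ⟨S, hS⟩ : ∃ s : ℝ, s = ∑ w : {p : Fin n × Fin n // p.1 < p.2} → Fin 8,
      ∑ v : Fin n → Fin 8, (norm (∑ x : Fin n → Fin 2, ff w v x)) ^ 4 := ⟨_, rfl⟩
  have hgoal : (∑ w : {p : Fin n × Fin n // p.1 < p.2} → Fin 8, ∑ v : Fin n → Fin 8,
      (norm (∑ x : Fin n → Fin 2,
          Complex.I ^ (∑ p : {p : Fin n × Fin n // p.1 < p.2},
              ((w p : ℕ) : ℤ) * ((x p.1.1 : ℕ) : ℤ) * ((x p.1.2 : ℕ) : ℤ))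
            * Complex.exp (Real.pi * Complex.I / 4 *
                ((∑ k : Fin n, ((v k : ℕ) : ℤ) * ((x k : ℕ) : ℤ) : ℤ) : ℂ)))) ^ 4) = S := by
    simp only [hS, ff, Qf, Lf]
  rw [hgoal]
  -- identify S with the indicator count
  have hSc : (S : ℂ) = ∑ x : Fin n → Fin 2, ∑ y : Fin n → Fin 2, ∑ z : Fin n → Fin 2,
      ∑ t : Fin n → Fin 2,
        (if (∀ p, (4:ℤ) ∣ Bq x y z t p) ∧ (∀ k, (8:ℤ) ∣ Aq x y z t k)
          then (8:ℂ) ^ M * 8 ^ n else 0) := by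
    rw [hM]
    calc (S : ℂ)
        = ∑ w : {p : Fin n × Fin n // p.1 < p.2} → Fin 8, ∑ v : Fin n → Fin 8,
            ((norm (∑ x : Fin n → Fin 2, ff w v x) ^ 4 : ℝ) : ℂ) := by
          rw [hS]; push_cast; rfl
      _ = ∑ w : {p : Fin n × Fin n // p.1 < p.2} → Fin 8, ∑ v : Fin n → Fin 8,
            ∑ x : Fin n → Fin 2, ∑ y : Fin n → Fin 2, ∑ z : Fin n → Fin 2,
              ∑ t : Fin n → Fin 2,
            Complex.I ^ (Qf w x - Qf w y + Qf w z - Qf w t) *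
              Complex.exp (Real.pi * Complex.I / 4 *
                (((Lf v x - Lf v y + Lf v z - Lf v t : ℤ) : ℂ))) := by
          exact Finset.sum_congr rfl fun w _ => Finset.sum_congr rfl fun v _ => expand4 w v
      _ = ∑ x : Fin n → Fin 2, ∑ y : Fin n → Fin 2, ∑ z : Fin n → Fin 2,
            ∑ t : Fin n → Fin 2,
            ∑ w : {p : Fin n × Fin n // p.1 < p.2} → Fin 8, ∑ v : Fin n → Fin 8,
            Complex.I ^ (Qf w x - Qf w y + Qf w z - Qf w t) *
              Complex.exp (Real.pi * Complex.I / 4 *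
                (((Lf v x - Lf v y + Lf v z - Lf v t : ℤ) : ℂ))) :=
          swap6 _
      _ = _ := by
          exact Finset.sum_congr rfl fun x _ => Finset.sum_congr rfl fun y _ =>
            Finset.sum_congr rfl fun z _ => Finset.sum_congr rfl fun t _ => wv_sum x y z t
  have hSr : S = ∑ x : Fin n → Fin 2, ∑ y : Fin n → Fin 2, ∑ z : Fin n → Fin 2,
      ∑ t : Fin n → Fin 2,
        (if (∀ p, (4:ℤ) ∣ Bq x y z t p) ∧ (∀ k, (8:ℤ) ∣ Aq x y z t k) then C else 0) := by
    apply Complex.ofReal_injective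
    rw [hSc, hC]
    push_cast [apply_ite ((↑) : ℝ → ℂ)]
    rfl
  -- bound the count
  have hbound : S ≤ 2 * ((2:ℝ)^n * 2^n) * C := by
    rw [hSr]
    have step : ∀ x y z t : Fin n → Fin 2,
        (if (∀ p, (4:ℤ) ∣ Bq x y z t p) ∧ (∀ k, (8:ℤ) ∣ Aq x y z t k) then C else 0)
          ≤ (if y = x ∧ t = z then C else 0) + (if y = z ∧ t = x then C else 0) := by
      intro x y z t
      have h9 : (0:ℝ) ≤ (if y = x ∧ t = z then C else 0) := by
        split_ifs
        exacts [hCpos.le, le_rfl]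
      have h10 : (0:ℝ) ≤ (if y = z ∧ t = x then C else 0) := by
        split_ifs
        exacts [hCpos.le, le_rfl]
      by_cases h : (∀ p, (4:ℤ) ∣ Bq x y z t p) ∧ (∀ k, (8:ℤ) ∣ Aq x y z t k)
      · rw [if_pos h]
        rcases cond_key x y z t h.1 h.2 with h1 | h2
        · rw [if_pos h1] at h9 ⊢
          linarith
        · rw [if_pos h2] at h10 ⊢
          linarith
      · rw [if_neg h]
        linarith
    calc (∑ x : Fin n → Fin 2, ∑ y : Fin n → Fin 2, ∑ z : Fin n → Fin 2,
        ∑ t : Fin n → Fin 2,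
          (if (∀ p, (4:ℤ) ∣ Bq x y z t p) ∧ (∀ k, (8:ℤ) ∣ Aq x y z t k) then C else 0))
        ≤ ∑ x : Fin n → Fin 2, ∑ y : Fin n → Fin 2, ∑ z : Fin n → Fin 2,
            ∑ t : Fin n → Fin 2,
            ((if y = x ∧ t = z then C else 0) + (if y = z ∧ t = x then C else 0)) := by
          refine Finset.sum_le_sum fun x _ => Finset.sum_le_sum fun y _ =>
            Finset.sum_le_sum fun z _ => Finset.sum_le_sum fun t _ => step x y z t
      _ = 2 * ((2:ℝ)^n * 2^n) * C := by
          simp only [Finset.sum_add_distrib]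
          have e1 : ∀ x z : Fin n → Fin 2,
              (∑ y : Fin n → Fin 2, ∑ t : Fin n → Fin 2,
                (if y = x ∧ t = z then C else 0)) = C := by
            intro x z
            simp [ite_and, Finset.sum_ite_eq']
          have e2 : ∀ x z : Fin n → Fin 2,
              (∑ y : Fin n → Fin 2, ∑ t : Fin n → Fin 2,
                (if y = z ∧ t = x then C else 0)) = C := by
            intro x z
            simp [ite_and, Finset.sum_ite_eq']
          have E1 : (∑ x : Fin n → Fin 2, ∑ y : Fin n → Fin 2, ∑ z : Fin n → Fin 2,
              ∑ t : Fin n → Fin 2, (if y = x ∧ t = z then C else 0)) = (2:ℝ)^n * 2^n * C := by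
            calc (∑ x : Fin n → Fin 2, ∑ y : Fin n → Fin 2, ∑ z : Fin n → Fin 2,
                ∑ t : Fin n → Fin 2, (if y = x ∧ t = z then C else 0))
                = ∑ x : Fin n → Fin 2, ∑ z : Fin n → Fin 2, ∑ y : Fin n → Fin 2,
                    ∑ t : Fin n → Fin 2, (if y = x ∧ t = z then C else 0) :=
                  Finset.sum_congr rfl fun x _ => Finset.sum_comm
              _ = ∑ _x : Fin n → Fin 2, ∑ _z : Fin n → Fin 2, C :=
                  Finset.sum_congr rfl fun x _ => Finset.sum_congr rfl fun z _ => e1 x z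
              _ = (2:ℝ)^n * 2^n * C := by
                  simp [Finset.sum_const, Finset.card_univ]
                  ring
          have E2 : (∑ x : Fin n → Fin 2, ∑ y : Fin n → Fin 2, ∑ z : Fin n → Fin 2,
              ∑ t : Fin n → Fin 2, (if y = z ∧ t = x then C else 0)) = (2:ℝ)^n * 2^n * C := by
            calc (∑ x : Fin n → Fin 2, ∑ y : Fin n → Fin 2, ∑ z : Fin n → Fin 2,
                ∑ t : Fin n → Fin 2, (if y = z ∧ t = x then C else 0))
                = ∑ x : Fin n → Fin 2, ∑ z : Fin n → Fin 2, ∑ y : Fin n → Fin 2,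
                    ∑ t : Fin n → Fin 2, (if y = z ∧ t = x then C else 0) :=
                  Finset.sum_congr rfl fun x _ => Finset.sum_comm
              _ = ∑ _x : Fin n → Fin 2, ∑ _z : Fin n → Fin 2, C :=
                  Finset.sum_congr rfl fun x _ => Finset.sum_congr rfl fun z _ => e2 x z
              _ = (2:ℝ)^n * 2^n * C := by
                  simp [Finset.sum_const, Finset.card_univ]
                  ring
          rw [E1, E2]
          ring
  -- final arithmetic
  have hcard : ((Fintype.card ({p : Fin n × Fin n // p.1 < p.2} → Fin 8) : ℝ)
      * (Fintype.card (Fin n → Fin 8) : ℝ)) = C := by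
    rw [hC, Fintype.card_fun, Fintype.card_fun, Fintype.card_fin, Fintype.card_fin, hM]
    push_cast
    ring
  rw [hcard, div_le_iff₀ hCpos]
  calc S ≤ 2 * ((2:ℝ)^n * 2^n) * C := hbound
    _ ≤ 3 * 2 ^ (2*n) * C := by
        have h2n : (2:ℝ)^n * 2^n = 2^(2*n) := by
          rw [← pow_add]
          ring_nf
        rw [h2n]
        nlinarith [hCpos.le, pow_pos (show (0:ℝ) < 2 by norm_num) (2*n)]
end

section
/- Let w, x, y, z ∈ {0,1}ⁿ with w, x, y pairwise distinct and z = w + x - y (componentwise, as integer vectors). Then there exist indices i ≠ j such that w_i(y_j - x_j) + x_i(y_j - w_j) + y_i(w_j + x_j) - 2y_i y_j ≢ 0 (mod r) for every integer r ≥ 2; indeed, the expression equals ±1 for these i, j. -/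
lemma cross_term_key (wi xi yi wj xj yj : Fin 2) (h1 : wi ≠ xi)
    (h2 : (yi = xi ∧ xj ≠ yj) ∨ (yi = wi ∧ wj ≠ yj)) :
    (((wi : ℕ) : ℤ) * (((yj : ℕ) : ℤ) - ((xj : ℕ) : ℤ))
        + ((xi : ℕ) : ℤ) * (((yj : ℕ) : ℤ) - ((wj : ℕ) : ℤ))
        + ((yi : ℕ) : ℤ) * (((wj : ℕ) : ℤ) + ((xj : ℕ) : ℤ))
        - 2 * ((yi : ℕ) : ℤ) * ((yj : ℕ) : ℤ) = 1
      ∨ ((wi : ℕ) : ℤ) * (((yj : ℕ) : ℤ) - ((xj : ℕ) : ℤ))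
        + ((xi : ℕ) : ℤ) * (((yj : ℕ) : ℤ) - ((wj : ℕ) : ℤ))
        + ((yi : ℕ) : ℤ) * (((wj : ℕ) : ℤ) + ((xj : ℕ) : ℤ))
        - 2 * ((yi : ℕ) : ℤ) * ((yj : ℕ) : ℤ) = -1) := by
  fin_cases wi <;> fin_cases xi <;> fin_cases yi <;>
    fin_cases wj <;> fin_cases xj <;> fin_cases yj <;> simp_all <;> decide

/-- Combinatorial claim from the anticoncentration lemma: if `w, x, y ∈ {0,1}ⁿ`
are pairwise distinct and `z = w + x - y` (componentwise as integers), then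
there exist distinct indices `i ≠ j` such that the integer expression
`w_i(y_j - x_j) + x_i(y_j - w_j) + y_i(w_j + x_j) - 2y_iy_j` equals `±1`
(hence is nonzero modulo any `r ≥ 2`). -/
theorem exists_nonzero_cross_term (n : ℕ) (w x y z : Fin n → Fin 2)
    (hwx : w ≠ x) (hwy : w ≠ y) (hxy : x ≠ y)
    (hz : ∀ k, ((z k : ℕ) : ℤ) = ((w k : ℕ) : ℤ) + ((x k : ℕ) : ℤ) - ((y k : ℕ) : ℤ)) :
    ∃ i j : Fin n, i ≠ j ∧
      (((w i : ℕ) : ℤ) * (((y j : ℕ) : ℤ) - ((x j : ℕ) : ℤ))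
        + ((x i : ℕ) : ℤ) * (((y j : ℕ) : ℤ) - ((w j : ℕ) : ℤ))
        + ((y i : ℕ) : ℤ) * (((w j : ℕ) : ℤ) + ((x j : ℕ) : ℤ))
        - 2 * ((y i : ℕ) : ℤ) * ((y j : ℕ) : ℤ) = 1
      ∨ ((w i : ℕ) : ℤ) * (((y j : ℕ) : ℤ) - ((x j : ℕ) : ℤ))
        + ((x i : ℕ) : ℤ) * (((y j : ℕ) : ℤ) - ((w j : ℕ) : ℤ))
        + ((y i : ℕ) : ℤ) * (((w j : ℕ) : ℤ) + ((x j : ℕ) : ℤ))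
        - 2 * ((y i : ℕ) : ℤ) * ((y j : ℕ) : ℤ) = -1) := by
  obtain ⟨i, hi⟩ := Function.ne_iff.mp hwx
  have hyi : y i = x i ∨ y i = w i := by
    rcases Fin.exists_fin_two.mp ⟨y i, rfl⟩ with _ | _ <;> omega
  rcases hyi with hyi | hyi
  · obtain ⟨j, hj⟩ := Function.ne_iff.mp hxy
    refine ⟨i, j, ?_, cross_term_key _ _ _ _ _ _ hi (Or.inl ⟨hyi, hj⟩)⟩
    rintro rfl
    exact hj hyi.symm
  · obtain ⟨j, hj⟩ := Function.ne_iff.mp hwy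
    refine ⟨i, j, ?_, cross_term_key _ _ _ _ _ _ hi (Or.inr ⟨hyi, hj⟩)⟩
    rintro rfl
    exact hj hyi.symm
end
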